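/- For every f ∈ L¹(Ω,μ), lim_{n→∞} ∫_Ω | (ϱ_n ⋄ f)(x) − f(x) | dμ(x) = 0; that is, ϱ_n ⋄ f converges to f in L¹(Ω,μ). -/

import Mathlib

open MeasureTheory Set Filter Topology
open scoped ENNReal NNReal

noncomputable section

/-- Forward exit time of the flow `Φ` from `Ω` (`∞` if the forward curve never leaves `Ω`). -/
def tauP {N : ℕ} (Ω : Set (Fin N → ℝ)) (Φ : (Fin N → ℝ) → ℝ → (Fin N → ℝ))
    (x : Fin N → ℝ) : ℝ≥0∞ :=
  sInf {s : ℝ≥0∞ | ∃ r : ℝ, 0 < r ∧ s = ENNReal.ofReal r ∧ Φ x r ∉ Ω}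

/-- Backward exit time of the flow `Φ` from `Ω`. -/
def tauM {N : ℕ} (Ω : Set (Fin N → ℝ)) (Φ : (Fin N → ℝ) → ℝ → (Fin N → ℝ))
    (x : Fin N → ℝ) : ℝ≥0∞ :=
  sInf {s : ℝ≥0∞ | ∃ r : ℝ, 0 < r ∧ s = ENNReal.ofReal r ∧ Φ x (-r) ∉ Ω}

/-- `∫_0^τ g(s) ds`, over `(0,∞)` when `τ = ∞`. -/
def curveInt (g : ℝ → ℝ) (τ : ℝ≥0∞) : ℝ :=
  ∫ s in {s : ℝ | 0 < s ∧ ENNReal.ofReal s < τ}, g s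

/-- The incoming part `Γ₋` of the boundary `∂Ω`. -/
def GammaM {N : ℕ} (Ω : Set (Fin N → ℝ)) (Φ : (Fin N → ℝ) → ℝ → (Fin N → ℝ)) :
    Set (Fin N → ℝ) :=
  {y ∈ frontier Ω | ∃ x ∈ Ω, tauM Ω Φ x < ⊤ ∧ y = Φ x (-(tauM Ω Φ x).toReal)}

/-- The outgoing part `Γ₊` of the boundary `∂Ω`. -/
def GammaP {N : ℕ} (Ω : Set (Fin N → ℝ)) (Φ : (Fin N → ℝ) → ℝ → (Fin N → ℝ)) :
    Set (Fin N → ℝ) :=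
  {y ∈ frontier Ω | ∃ x ∈ Ω, tauP Ω Φ x < ⊤ ∧ y = Φ x ((tauP Ω Φ x).toReal)}

/-- The boundary measures `μ∓` satisfy the integration-along-characteristics identities. -/
def IsBoundaryMeasures {N : ℕ} (Ω : Set (Fin N → ℝ)) (Φ : (Fin N → ℝ) → ℝ → (Fin N → ℝ))
    (μ μm μp : Measure (Fin N → ℝ)) : Prop :=
  ∀ f : (Fin N → ℝ) → ℝ, Integrable f (μ.restrict Ω) →
    (∫ x in {x ∈ Ω | tauM Ω Φ x < ⊤}, f x ∂μ
        = ∫ y in GammaM Ω Φ, curveInt (fun s => f (Φ y s)) (tauP Ω Φ y) ∂μm) ∧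
    (∫ x in {x ∈ Ω | tauP Ω Φ x < ⊤}, f x ∂μ
        = ∫ y in GammaP Ω Φ, curveInt (fun s => f (Φ y (-s))) (tauM Ω Φ y) ∂μp)

/-- The identities of Lemma `defmu+-` (beals1 and beals2). -/
def BealsProperty {N : ℕ} (Ω : Set (Fin N → ℝ)) (Φ : (Fin N → ℝ) → ℝ → (Fin N → ℝ))
    (μ μm μp : Measure (Fin N → ℝ)) : Prop :=
  ∀ T : ℝ, 0 < T → ∀ f : ((Fin N → ℝ) × ℝ) → ℝ,
    Integrable f ((μ.restrict Ω).prod (volume.restrict (Ioo (0 : ℝ) T))) →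
    (∫ p, f p ∂((μ.restrict Ω).prod (volume.restrict (Ioo (0 : ℝ) T)))
        = (∫ t in Ioo (0 : ℝ) T, (∫ y in GammaP Ω Φ,
            (∫ s in Ioo (0 : ℝ) ((tauM Ω Φ y ⊓ ENNReal.ofReal t).toReal),
              f (Φ y (-s), t - s)) ∂μp))
          + ∫ x in Ω, (∫ s in Ioo (0 : ℝ) ((tauM Ω Φ x ⊓ ENNReal.ofReal T).toReal),
              f (Φ x (-s), T - s)) ∂μ)
    ∧ (∫ p, f p ∂((μ.restrict Ω).prod (volume.restrict (Ioo (0 : ℝ) T)))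
        = (∫ t in Ioo (0 : ℝ) T, (∫ y in GammaM Ω Φ,
            (∫ s in Ioo (0 : ℝ) ((tauP Ω Φ y ⊓ ENNReal.ofReal (T - t)).toReal),
              f (Φ y s, t + s)) ∂μm))
          + ∫ x in Ω, (∫ s in Ioo (0 : ℝ) ((tauP Ω Φ x ⊓ ENNReal.ofReal T).toReal),
              f (Φ x s, s)) ∂μ)

/-- The class `𝔜` of test functions, together with the derivative `Dψ` along the flow. -/
structure IsTestFun {N : ℕ} (Ω : Set (Fin N → ℝ)) (Φ : (Fin N → ℝ) → ℝ → (Fin N → ℝ))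
    (ψ Dψ : (Fin N → ℝ) → ℝ) : Prop where
  measurable : Measurable ψ
  bounded : ∃ C, ∀ x, |ψ x| ≤ C
  compact_support : ∃ K : Set (Fin N → ℝ), IsCompact K ∧ K ⊆ Ω ∧ ∀ x ∉ K, ψ x = 0
  smooth : ∀ x ∈ Ω, ContDiffOn ℝ 1 (fun s => ψ (Φ x s))
      {s : ℝ | ENNReal.ofReal s < tauP Ω Φ x ∧ ENNReal.ofReal (-s) < tauM Ω Φ x}
  hasDeriv : ∀ x ∈ Ω, HasDerivAt (fun s => ψ (Φ x s)) (Dψ x) 0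
  measurableD : Measurable Dψ
  boundedD : ∃ C, ∀ x, |Dψ x| ≤ C

/-- `f ∈ D(T_max)` with `T_max f = g`. -/
def InDomTmax {N : ℕ} (Ω : Set (Fin N → ℝ)) (Φ : (Fin N → ℝ) → ℝ → (Fin N → ℝ))
    (μ : Measure (Fin N → ℝ)) (f g : (Fin N → ℝ) → ℝ) : Prop :=
  Integrable f (μ.restrict Ω) ∧ Integrable g (μ.restrict Ω) ∧
    ∀ ψ Dψ : (Fin N → ℝ) → ℝ, IsTestFun Ω Φ ψ Dψ →
      ∫ x in Ω, g x * ψ x ∂μ = ∫ x in Ω, f x * Dψ x ∂μ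

/-- A sequence of one-dimensional mollifiers supported in `[0, 1/n]`. -/
def IsMollifier (ρ : ℕ → ℝ → ℝ) : Prop :=
  ∀ n : ℕ, ContDiff ℝ (⊤ : ℕ∞) (ρ n) ∧ (∀ s, 0 ≤ ρ n s) ∧
    (∀ s, s ∉ Icc (0 : ℝ) (1 / (n + 1 : ℝ)) → ρ n s = 0) ∧ (∫ s, ρ n s) = 1

/-- Mollification along the characteristic curves. -/
def moll {N : ℕ} (Ω : Set (Fin N → ℝ)) (Φ : (Fin N → ℝ) → ℝ → (Fin N → ℝ))
    (ρ : ℝ → ℝ) (f : (Fin N → ℝ) → ℝ) (x : Fin N → ℝ) : ℝ :=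
  curveInt (fun s => ρ s * f (Φ x (-s))) (tauM Ω Φ x)

/-- The lifted flow `Ψ(ξ,s) = (Φ(ξ₁,s), ξ₂+s)` on `Ω × (0,T)`. -/
def lflow {N : ℕ} (Φ : (Fin N → ℝ) → ℝ → (Fin N → ℝ)) (ξ : (Fin N → ℝ) × ℝ) (s : ℝ) :
    (Fin N → ℝ) × ℝ := (Φ ξ.1 s, ξ.2 + s)

/-- Forward exit time `ℓ₊` of the lifted flow. -/
def ellP {N : ℕ} (Ω : Set (Fin N → ℝ)) (Φ : (Fin N → ℝ) → ℝ → (Fin N → ℝ)) (T : ℝ)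
    (ξ : (Fin N → ℝ) × ℝ) : ℝ≥0∞ := tauP Ω Φ ξ.1 ⊓ ENNReal.ofReal (T - ξ.2)

/-- Backward exit time `ℓ₋` of the lifted flow. -/
def ellM {N : ℕ} (Ω : Set (Fin N → ℝ)) (Φ : (Fin N → ℝ) → ℝ → (Fin N → ℝ))
    (ξ : (Fin N → ℝ) × ℝ) : ℝ≥0∞ := tauM Ω Φ ξ.1 ⊓ ENNReal.ofReal ξ.2

/-- The incoming part `Σ₋,T` of the boundary of `Ω × (0,T)`. -/
def SigmaM {N : ℕ} (Ω : Set (Fin N → ℝ)) (Φ : (Fin N → ℝ) → ℝ → (Fin N → ℝ)) (T : ℝ) :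
    Set ((Fin N → ℝ) × ℝ) :=
  {ζ ∈ frontier (Ω ×ˢ Ioo (0 : ℝ) T) |
    ∃ ξ ∈ Ω ×ˢ Ioo (0 : ℝ) T, ζ = lflow Φ ξ (-(ellM Ω Φ ξ).toReal)}

/-- The outgoing part `Σ₊,T` of the boundary of `Ω × (0,T)`. -/
def SigmaP {N : ℕ} (Ω : Set (Fin N → ℝ)) (Φ : (Fin N → ℝ) → ℝ → (Fin N → ℝ)) (T : ℝ) :
    Set ((Fin N → ℝ) × ℝ) :=
  {ζ ∈ frontier (Ω ×ˢ Ioo (0 : ℝ) T) |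
    ∃ ξ ∈ Ω ×ˢ Ioo (0 : ℝ) T, ζ = lflow Φ ξ ((ellP Ω Φ T ξ).toReal)}

/-- The semigroup `U₀(t)` with no re-entry boundary conditions. -/
def U0 {N : ℕ} (Ω : Set (Fin N → ℝ)) (Φ : (Fin N → ℝ) → ℝ → (Fin N → ℝ)) (t : ℝ)
    (f : (Fin N → ℝ) → ℝ) (x : Fin N → ℝ) : ℝ :=
  if ENNReal.ofReal t < tauM Ω Φ x then f (Φ x (-t)) else 0

/-- `x ↦ ∫_0^{τ₋(x)} e^{-λ t} g(Φ(x,-t)) dt`. -/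
def resolv {N : ℕ} (Ω : Set (Fin N → ℝ)) (Φ : (Fin N → ℝ) → ℝ → (Fin N → ℝ)) (lam : ℝ)
    (g : (Fin N → ℝ) → ℝ) (x : Fin N → ℝ) : ℝ :=
  curveInt (fun t => Real.exp (-(lam * t)) * g (Φ x (-t))) (tauM Ω Φ x)

/-- The candidate solution of the boundary value problem `(λ - T_max) f = g`, `B⁻ f = u`. -/
def bvpSol {N : ℕ} (Ω : Set (Fin N → ℝ)) (Φ : (Fin N → ℝ) → ℝ → (Fin N → ℝ)) (lam : ℝ)
    (g u : (Fin N → ℝ) → ℝ) (x : Fin N → ℝ) : ℝ :=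
  resolv Ω Φ lam g x +
    (if tauM Ω Φ x < ⊤ then
      Real.exp (-(lam * (tauM Ω Φ x).toReal)) * u (Φ x (-(tauM Ω Φ x).toReal)) else 0)

/-- `f` has incoming trace `u` on `Γ₋`, via an absolutely continuous representative
(along the characteristics, with derivative `-g`). -/
def IsTraceM {N : ℕ} (Ω : Set (Fin N → ℝ)) (Φ : (Fin N → ℝ) → ℝ → (Fin N → ℝ))
    (μ μm : Measure (Fin N → ℝ)) (f g u : (Fin N → ℝ) → ℝ) : Prop :=
  ∃ fs : (Fin N → ℝ) → ℝ, fs =ᵐ[μ.restrict Ω] f ∧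
    (∀ᵐ x ∂μ.restrict Ω, ∀ t₁ t₂ : ℝ, t₁ ≤ t₂ →
      ENNReal.ofReal (-t₁) < tauM Ω Φ x → ENNReal.ofReal t₂ < tauP Ω Φ x →
      fs (Φ x t₁) - fs (Φ x t₂) = ∫ s in t₁..t₂, g (Φ x s)) ∧
    ∀ᵐ y ∂μm.restrict (GammaM Ω Φ),
      Tendsto (fun t => fs (Φ y t)) (𝓝[>] (0 : ℝ)) (𝓝 (u y))

/-- `f` has outgoing trace `w` on `Γ₊`. -/
def IsTraceP {N : ℕ} (Ω : Set (Fin N → ℝ)) (Φ : (Fin N → ℝ) → ℝ → (Fin N → ℝ))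
    (μ μp : Measure (Fin N → ℝ)) (f g w : (Fin N → ℝ) → ℝ) : Prop :=
  ∃ fs : (Fin N → ℝ) → ℝ, fs =ᵐ[μ.restrict Ω] f ∧
    (∀ᵐ x ∂μ.restrict Ω, ∀ t₁ t₂ : ℝ, t₁ ≤ t₂ →
      ENNReal.ofReal (-t₁) < tauM Ω Φ x → ENNReal.ofReal t₂ < tauP Ω Φ x →
      fs (Φ x t₁) - fs (Φ x t₂) = ∫ s in t₁..t₂, g (Φ x s)) ∧
    ∀ᵐ y ∂μp.restrict (GammaP Ω Φ),
      Tendsto (fun t => fs (Φ y (-t))) (𝓝[>] (0 : ℝ)) (𝓝 (w y))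

variable {N : ℕ} {κ : ℝ≥0}
  {F : (Fin N → ℝ) → (Fin N → ℝ)} (hF : LipschitzWith κ F)
  {Φ : (Fin N → ℝ) → ℝ → (Fin N → ℝ)}
  (hΦ0 : ∀ x, Φ x 0 = x)
  (hΦ' : ∀ x s, HasDerivAt (Φ x) (F (Φ x s)) s)

include hF hΦ' in
/-- uniqueness of solutions starting at the same point -/
lemma flow_unique {f g : ℝ → (Fin N → ℝ)}
    (hf : ∀ t, HasDerivAt f (F (f t)) t) (hg : ∀ t, HasDerivAt g (F (g t)) t)
    (h0 : f 0 = g 0) : f = g := by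
  funext t
  rcases eq_or_ne t 0 with rfl | ht
  · exact h0
  have hmem : (0:ℝ) ∈ Ioo (-(|t|+1)) (|t|+1) := by
    constructor <;> nlinarith [abs_nonneg t]
  have := ODE_solution_unique_of_mem_Ioo (v := fun _ y => F y) (s := fun _ => (univ : Set (Fin N → ℝ)))
    (K := κ) (fun _ _ => hF.lipschitzOnWith) hmem
    (f := f) (g := g) (fun u _ => ⟨hf u, trivial⟩) (fun u _ => ⟨hg u, trivial⟩) h0
  exact this ⟨by nlinarith [le_abs_self t, neg_abs_le t], by nlinarith [le_abs_self t]⟩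

include hF hΦ0 hΦ' in
lemma flow_add (x : Fin N → ℝ) (a b : ℝ) : Φ x (a + b) = Φ (Φ x a) b := by
  have := flow_unique hF hΦ' (f := fun t => Φ x (a + t)) (g := fun t => Φ (Φ x a) t)
    (fun t => by
      have h1 : HasDerivAt (fun u => Φ x (a + u)) ((1:ℝ) • F (Φ x (a + t))) t :=
        HasDerivAt.scomp (𝕜 := ℝ) t (by simpa using hΦ' x (a + t)) ((hasDerivAt_id t).const_add a)
      simpa using h1)
    (fun t => hΦ' _ t) (by simp [hΦ0])
  exact congrFun this b

include hF hΦ0 hΦ' in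
lemma flow_inv (x : Fin N → ℝ) (t : ℝ) : Φ (Φ x t) (-t) = x := by
  rw [← flow_add hF hΦ0 hΦ', add_neg_cancel, hΦ0]

include hF hΦ0 hΦ' in
/-- Gronwall estimate for the flow, two-sided in time. -/
lemma flow_dist (x y : Fin N → ℝ) {t T : ℝ} (hT : |t| ≤ T) :
    dist (Φ x t) (Φ y t) ≤ dist x y * Real.exp (κ * T) := by
  have key : ∀ (G : (Fin N → ℝ) → (Fin N → ℝ)), LipschitzWith κ G →
      ∀ (f g : ℝ → (Fin N → ℝ)), (∀ s, HasDerivAt f (G (f s)) s) →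
      (∀ s, HasDerivAt g (G (g s)) s) → ∀ u : ℝ, 0 ≤ u →
      dist (f u) (g u) ≤ dist (f 0) (g 0) * Real.exp (κ * u) := by
    intro G hG f g hf hg u hu
    have := dist_le_of_trajectories_ODE (v := fun _ y => G y) (K := κ)
      (fun _ => hG) (f := f) (g := g)
      (a := 0) (b := u) (δ := dist (f 0) (g 0))
      (fun s _ => (hf s).continuousAt.continuousWithinAt)
      (fun s _ => (hf s).hasDerivWithinAt)
      (fun s _ => (hg s).continuousAt.continuousWithinAt)
      (fun s _ => (hg s).hasDerivWithinAt) le_rfl u ⟨hu, le_rfl⟩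
    simpa using this
  have hd : dist (Φ x t) (Φ y t) ≤ dist x y * Real.exp (κ * |t|) := by
    rcases le_or_gt 0 t with h | h
    · have := key F hF (Φ x) (Φ y) (hΦ' x) (hΦ' y) t h
      simpa [abs_of_nonneg h, hΦ0] using this
    · have hG : LipschitzWith κ (fun z => -F z) := by
        have := LipschitzWith.comp (LipschitzWith.id (α := Fin N → ℝ)).neg hF
        simpa [Function.comp_def] using this
      have := key (fun z => -F z) hG (fun s => Φ x (-s)) (fun s => Φ y (-s))
        (fun s => by
          have h1 : HasDerivAt (fun u => Φ x (-u)) ((-1:ℝ) • F (Φ x (-s))) s :=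
            HasDerivAt.scomp (𝕜 := ℝ) s (by simpa using hΦ' x (-s)) (hasDerivAt_neg s)
          simpa [neg_smul] using h1)
        (fun s => by
          have h1 : HasDerivAt (fun u => Φ y (-u)) ((-1:ℝ) • F (Φ y (-s))) s :=
            HasDerivAt.scomp (𝕜 := ℝ) s (by simpa using hΦ' y (-s)) (hasDerivAt_neg s)
          simpa [neg_smul] using h1)
        (-t) (by linarith)
      simpa [abs_of_neg h, hΦ0, mul_neg, neg_neg] using this
  refine hd.trans ?_
  have : Real.exp (κ * |t|) ≤ Real.exp (κ * T) :=
    Real.exp_le_exp.2 (mul_le_mul_of_nonneg_left hT κ.2)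
  exact mul_le_mul_of_nonneg_left this dist_nonneg

include hF hΦ0 hΦ' in
lemma flow_cont : Continuous (fun p : (Fin N → ℝ) × ℝ => Φ p.1 p.2) := by
  rw [continuous_iff_continuousAt]
  rintro ⟨x₀, t₀⟩
  rw [Metric.continuousAt_iff]
  intro ε hε
  set T : ℝ := |t₀| + 1 with hT
  -- continuity in time at t₀
  have hct : ContinuousAt (Φ x₀) t₀ := (hΦ' x₀ t₀).continuousAt
  rw [Metric.continuousAt_iff] at hct
  obtain ⟨δ₁, hδ₁, hball⟩ := hct (ε / 2) (by linarith)
  refine ⟨min (min δ₁ 1) (ε / 2 / Real.exp (κ * T) + 1 - 1), ?_, ?_⟩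
  · have : (0:ℝ) < ε / 2 / Real.exp (κ * T) := by positivity
    simp only [lt_min_iff]
    exact ⟨⟨hδ₁, one_pos⟩, by linarith⟩
  rintro ⟨x, t⟩ h
  rw [Prod.dist_eq, max_lt_iff] at h
  obtain ⟨hx, ht⟩ := h
  have ht1 : dist t t₀ < 1 := lt_of_lt_of_le ht (le_trans (min_le_left _ _) (min_le_right _ _))
  have htd : dist t t₀ < δ₁ := lt_of_lt_of_le ht (le_trans (min_le_left _ _) (min_le_left _ _))
  have hxd : dist x x₀ < ε / 2 / Real.exp (κ * T) := by
    have := lt_of_lt_of_le hx (min_le_right _ _)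
    linarith
  have h1 : dist (Φ x t) (Φ x₀ t) ≤ dist x x₀ * Real.exp (κ * T) := by
    refine flow_dist hF hΦ0 hΦ' x x₀ ?_
    have := abs_sub_abs_le_abs_sub t t₀
    rw [Real.dist_eq] at ht1
    simp only [hT]; linarith
  have h2 : dist (Φ x₀ t) (Φ x₀ t₀) < ε / 2 := hball htd
  have h1' : dist (Φ x t) (Φ x₀ t) < ε / 2 := by
    calc dist (Φ x t) (Φ x₀ t) ≤ dist x x₀ * Real.exp (κ * T) := h1
    _ < (ε / 2 / Real.exp (κ * T)) * Real.exp (κ * T) := by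
        have := Real.exp_pos ((κ:ℝ) * T); exact mul_lt_mul_of_pos_right hxd this
    _ = ε / 2 := by field_simp
  calc dist (Φ x t) (Φ x₀ t₀) ≤ dist (Φ x t) (Φ x₀ t) + dist (Φ x₀ t) (Φ x₀ t₀) := dist_triangle _ _ _
  _ < ε / 2 + ε / 2 := add_lt_add h1' h2
  _ = ε := by ring

/-- The time-`t` flow map as a homeomorphism. -/
def flowHomeo (hF : LipschitzWith κ F) (hΦ0 : ∀ x, Φ x 0 = x)
    (hΦ' : ∀ x s, HasDerivAt (Φ x) (F (Φ x s)) s) (t : ℝ) :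
    (Fin N → ℝ) ≃ₜ (Fin N → ℝ) where
  toFun x := Φ x t
  invFun x := Φ x (-t)
  left_inv x := flow_inv hF hΦ0 hΦ' x t
  right_inv x := by have := flow_inv hF hΦ0 hΦ' x (-t); simpa using this
  continuous_toFun := (flow_cont hF hΦ0 hΦ').comp (continuous_id.prodMk continuous_const)
  continuous_invFun := (flow_cont hF hΦ0 hΦ').comp (continuous_id.prodMk continuous_const)

include hF hΦ0 hΦ' in
lemma flow_measurePreserving (μ : Measure (Fin N → ℝ))
    (hinv : ∀ (A : Set (Fin N → ℝ)) (t : ℝ), MeasurableSet A →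
      μ ((fun x => Φ x t) '' A) = μ A) (t : ℝ) :
    MeasurePreserving (fun x => Φ x t) μ μ := by
  have hm : Measurable (fun x => Φ x t) :=
    ((flow_cont hF hΦ0 hΦ').comp (continuous_id.prodMk continuous_const)).measurable
  refine ⟨hm, ?_⟩
  ext A hA
  rw [Measure.map_apply hm hA]
  have : (fun x => Φ x t) ⁻¹' A = (fun x => Φ x (-t)) '' A := by
    ext z
    constructor
    · intro hz
      exact ⟨Φ z t, hz, flow_inv hF hΦ0 hΦ' z t⟩
    · rintro ⟨a, ha, rfl⟩
      have : Φ (Φ a (-t)) t = a := by have := flow_inv hF hΦ0 hΦ' a (-t); simpa using this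
      simpa [this] using ha
  rw [this, hinv A (-t) hA]

variable {Ω : Set (Fin N → ℝ)}

include hF hΦ0 hΦ' in
lemma tauM_char (hΩ : IsOpen Ω) {x : Fin N → ℝ} (hx : x ∈ Ω) {s : ℝ} (hs : 0 ≤ s) :
    ENNReal.ofReal s < tauM Ω Φ x ↔ ∀ r ∈ Icc 0 s, Φ x (-r) ∈ Ω := by
  constructor
  · intro h r ⟨hr0, hrs⟩
    rcases eq_or_lt_of_le hr0 with rfl | hr0'
    · simpa [hΦ0] using hx
    by_contra hout
    have hle : tauM Ω Φ x ≤ ENNReal.ofReal r := sInf_le ⟨r, hr0', rfl, hout⟩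
    exact absurd (h.trans_le (hle.trans (ENNReal.ofReal_le_ofReal hrs))) (lt_irrefl _)
  · intro h
    have hcont : Continuous (fun r : ℝ => Φ x (-r)) :=
      (flow_cont hF hΦ0 hΦ').comp (continuous_const.prodMk continuous_neg)
    have hU : IsOpen ((fun r : ℝ => Φ x (-r)) ⁻¹' Ω) := hΩ.preimage hcont
    have hKU : Icc 0 s ⊆ (fun r : ℝ => Φ x (-r)) ⁻¹' Ω := fun r hr => h r hr
    obtain ⟨δ, hδ, hth⟩ := (isCompact_Icc (a := (0:ℝ)) (b := s)).exists_thickening_subset_open hU hKU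
    have hsub : Icc 0 (s + δ/2) ⊆ (fun r : ℝ => Φ x (-r)) ⁻¹' Ω := by
      refine subset_trans ?_ hth
      intro r ⟨hr0, hrs⟩
      rw [Metric.mem_thickening_iff]
      refine ⟨min r s, ⟨le_min hr0 hs, min_le_right _ _⟩, ?_⟩
      rw [Real.dist_eq, abs_of_nonneg (by simp [le_min_iff, hr0])]
      rcases le_total r s with h' | h'
      · simp [min_eq_left h', hδ]
      · rw [min_eq_right h']; linarith
    have hge : ENNReal.ofReal (s + δ/2) ≤ tauM Ω Φ x := by
      refine le_sInf ?_
      rintro e ⟨r, hr0, rfl, hout⟩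
      have : r ∉ Icc 0 (s + δ/2) := fun hmem => hout (hsub hmem)
      have : s + δ/2 < r := by
        by_contra hc
        exact this ⟨hr0.le, not_lt.1 hc⟩
      exact ENNReal.ofReal_le_ofReal this.le
    refine lt_of_lt_of_le ?_ hge
    rw [ENNReal.ofReal_lt_ofReal_iff (by linarith)]
    linarith

include hF hΦ0 hΦ' in
lemma tauM_pos (hΩ : IsOpen Ω) {x : Fin N → ℝ} (hx : x ∈ Ω) : 0 < tauM Ω Φ x := by
  have := (tauM_char hF hΦ0 hΦ' hΩ hx le_rfl).2 (by
    intro r hr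
    simp only [mem_Icc] at hr
    have : r = 0 := le_antisymm (hr.2) hr.1
    simpa [this, hΦ0] using hx)
  simpa using this

include hF hΦ0 hΦ' in
lemma mem_of_lt_tauM (hΩ : IsOpen Ω) {x : Fin N → ℝ} (hx : x ∈ Ω) {s : ℝ} (hs : 0 ≤ s)
    (h : ENNReal.ofReal s < tauM Ω Φ x) : Φ x (-s) ∈ Ω :=
  (tauM_char hF hΦ0 hΦ' hΩ hx hs).1 h s ⟨hs, le_rfl⟩

include hF hΦ0 hΦ' in
lemma tauM_isOpen (hΩ : IsOpen Ω) {s : ℝ} (hs : 0 ≤ s) :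
    IsOpen {x | x ∈ Ω ∧ ENNReal.ofReal s < tauM Ω Φ x} := by
  have hset : {x | x ∈ Ω ∧ ENNReal.ofReal s < tauM Ω Φ x}
      = {x | ∀ r ∈ Icc 0 s, Φ x (-r) ∈ Ω} := by
    ext x
    constructor
    · rintro ⟨hx, h⟩
      exact (tauM_char hF hΦ0 hΦ' hΩ hx hs).1 h
    · intro h
      have hx : x ∈ Ω := by simpa [hΦ0] using h 0 ⟨le_rfl, hs⟩
      exact ⟨hx, (tauM_char hF hΦ0 hΦ' hΩ hx hs).2 h⟩
  rw [hset, Metric.isOpen_iff]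
  intro x hx
  have hcont : Continuous (fun r : ℝ => Φ x (-r)) :=
    (flow_cont hF hΦ0 hΦ').comp (continuous_const.prodMk continuous_neg)
  have hK : IsCompact ((fun r : ℝ => Φ x (-r)) '' Icc 0 s) := isCompact_Icc.image hcont
  have hKΩ : (fun r : ℝ => Φ x (-r)) '' Icc 0 s ⊆ Ω := by
    rintro _ ⟨r, hr, rfl⟩; exact hx r hr
  obtain ⟨ε, hε, hth⟩ := hK.exists_thickening_subset_open hΩ hKΩ
  refine ⟨ε / Real.exp (κ * s), by positivity, ?_⟩
  intro y hy
  intro r hr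
  have hd : dist (Φ y (-r)) (Φ x (-r)) ≤ dist y x * Real.exp (κ * s) := by
    refine flow_dist hF hΦ0 hΦ' y x ?_
    rw [abs_neg, abs_of_nonneg hr.1]
    exact hr.2
  have hlt : dist (Φ y (-r)) (Φ x (-r)) < ε := by
    rw [Metric.mem_ball] at hy
    calc dist (Φ y (-r)) (Φ x (-r)) ≤ dist y x * Real.exp (κ * s) := hd
    _ < (ε / Real.exp (κ * s)) * Real.exp (κ * s) := by
        exact mul_lt_mul_of_pos_right hy (Real.exp_pos _)
    _ = ε := by field_simp
  refine hth ?_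
  rw [Metric.mem_thickening_iff]
  exact ⟨Φ x (-r), ⟨r, hr, rfl⟩, hlt⟩

def setA' {N : ℕ} (Ω : Set (Fin N → ℝ)) (Φ : (Fin N → ℝ) → ℝ → (Fin N → ℝ)) :
    Set ((Fin N → ℝ) × ℝ) :=
  {p | p.1 ∈ Ω ∧ 0 < p.2 ∧ ENNReal.ofReal p.2 < tauM Ω Φ p.1}

include hF hΦ0 hΦ' in
lemma setA_measurable (hΩ : IsOpen Ω) : MeasurableSet (setA' Ω Φ) := by
  have : setA' Ω Φ = ⋃ q : ℚ,
      ({x | x ∈ Ω ∧ ENNReal.ofReal (q:ℝ) < tauM Ω Φ x} ×ˢ Ioc (0:ℝ) (q:ℝ)) := by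
    ext ⟨x, s⟩
    simp only [setA', mem_iUnion, mem_prod, mem_setOf_eq, mem_Ioc]
    constructor
    · rintro ⟨hx, hs, hlt⟩
      rcases eq_or_ne (tauM Ω Φ x) ⊤ with htop | htop
      · obtain ⟨q, hq⟩ := exists_rat_gt s
        exact ⟨q, ⟨hx, by simp [htop]⟩, hs, hq.le⟩
      · have hs' : s < (tauM Ω Φ x).toReal :=
          (ENNReal.ofReal_lt_iff_lt_toReal hs.le htop).1 hlt
        obtain ⟨q, hq1, hq2⟩ := exists_rat_btwn hs'
        refine ⟨q, ⟨hx, ?_⟩, hs, hq1.le⟩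
        rw [ENNReal.ofReal_lt_iff_lt_toReal (le_of_lt (hs.trans hq1)) htop]
        exact hq2
    · rintro ⟨q, ⟨hx, hq⟩, hs, hsq⟩
      exact ⟨hx, hs, lt_of_le_of_lt (ENNReal.ofReal_le_ofReal hsq) hq⟩
  rw [this]
  refine MeasurableSet.iUnion fun q => ?_
  rcases le_or_gt 0 (q:ℝ) with hq | hq
  · exact (tauM_isOpen hF hΦ0 hΦ' hΩ hq).measurableSet.prod measurableSet_Ioc
  · rw [Ioc_eq_empty (by linarith), prod_empty]
    exact MeasurableSet.empty

include hF hΦ0 hΦ' in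
lemma key_lintegral (hΩ : IsOpen Ω) (μ : Measure (Fin N → ℝ))
    (hinv : ∀ (A : Set (Fin N → ℝ)) (t : ℝ), MeasurableSet A →
      μ ((fun x => Φ x t) '' A) = μ A)
    (h : (Fin N → ℝ) → ℝ≥0∞) {s : ℝ} (hs : 0 ≤ s) :
    ∫⁻ x in {x | x ∈ Ω ∧ ENNReal.ofReal s < tauM Ω Φ x}, h (Φ x (-s)) ∂μ
      ≤ ∫⁻ y in Ω, h y ∂μ := by
  have hmp : MeasurePreserving (fun x => Φ x (-s)) μ μ :=
    flow_measurePreserving hF hΦ0 hΦ' μ hinv (-s)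
  have hemb : MeasurableEmbedding (fun x : Fin N → ℝ => Φ x (-s)) :=
    (flowHomeo hF hΦ0 hΦ' (-s)).measurableEmbedding
  rw [hmp.setLIntegral_comp_emb hemb]
  refine lintegral_mono_set ?_
  rintro _ ⟨x, ⟨hx, hlt⟩, rfl⟩
  exact mem_of_lt_tauM hF hΦ0 hΦ' hΩ hx hs hlt

include hF hΦ0 hΦ' in
lemma contract (hΩ : IsOpen Ω) (μ : Measure (Fin N → ℝ)) [SigmaFinite μ]
    (hinv : ∀ (A : Set (Fin N → ℝ)) (t : ℝ), MeasurableSet A →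
      μ ((fun x => Φ x t) '' A) = μ A)
    (h : (Fin N → ℝ) → ℝ≥0∞) (hh : Measurable h)
    (ρ0 : ℝ → ℝ) (hρ0 : Measurable ρ0) :
    ∫⁻ x in Ω, (∫⁻ s, (setA' Ω Φ).indicator
        (fun p => ENNReal.ofReal (ρ0 p.2) * h (Φ p.1 (-p.2))) (x, s)) ∂μ
      ≤ (∫⁻ y in Ω, h y ∂μ) * ∫⁻ s, ENNReal.ofReal (ρ0 s) := by
  have hΦm : Measurable (fun p : (Fin N → ℝ) × ℝ => Φ p.1 (-p.2)) :=
    ((flow_cont hF hΦ0 hΦ').comp (continuous_fst.prodMk continuous_snd.neg)).measurable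
  have hFmeas : Measurable ((setA' Ω Φ).indicator
      (fun p => ENNReal.ofReal (ρ0 p.2) * h (Φ p.1 (-p.2)))) :=
    (Measurable.mul ((ENNReal.measurable_ofReal.comp hρ0).comp measurable_snd)
      (hh.comp hΦm)).indicator (setA_measurable hF hΦ0 hΦ' hΩ)
  set G := (setA' Ω Φ).indicator
      (fun p => ENNReal.ofReal (ρ0 p.2) * h (Φ p.1 (-p.2))) with hG
  have hswap : ∫⁻ x in Ω, (∫⁻ s, G (x, s)) ∂μ = ∫⁻ s, (∫⁻ x in Ω, G (x, s) ∂μ) := by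
    exact lintegral_lintegral_swap (by exact hFmeas.aemeasurable)
  rw [hswap]
  set C := ∫⁻ y in Ω, h y ∂μ with hC
  have inner_le : ∀ s : ℝ, ∫⁻ x in Ω, G (x, s) ∂μ ≤ ENNReal.ofReal (ρ0 s) * C := by
    intro s
    rcases le_or_gt s 0 with hs | hs
    · have : ∀ x : Fin N → ℝ, G (x, s) = 0 := by
        intro x
        apply indicator_of_notMem
        rintro ⟨-, hs', -⟩
        exact absurd hs' (not_lt.2 hs)
      simp only [this, lintegral_zero]
      exact zero_le
    · set S := {x | x ∈ Ω ∧ ENNReal.ofReal s < tauM Ω Φ x} with hS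
      have hSmeas : MeasurableSet S := (tauM_isOpen hF hΦ0 hΦ' hΩ hs.le).measurableSet
      have hGle : ∀ x, G (x, s)
          ≤ ENNReal.ofReal (ρ0 s) * S.indicator (fun x => h (Φ x (-s))) x := by
        intro x
        by_cases hx : (x, s) ∈ setA' Ω Φ
        · rw [hG, indicator_of_mem hx, indicator_of_mem (show x ∈ S from ⟨hx.1, hx.2.2⟩)]
        · rw [hG, indicator_of_notMem hx]
          exact zero_le
      calc ∫⁻ x in Ω, G (x, s) ∂μ
          ≤ ∫⁻ x in Ω, ENNReal.ofReal (ρ0 s) * S.indicator (fun x => h (Φ x (-s))) x ∂μ :=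
            lintegral_mono hGle
        _ = ENNReal.ofReal (ρ0 s) * ∫⁻ x in Ω, S.indicator (fun x => h (Φ x (-s))) x ∂μ :=
            lintegral_const_mul _ ((hh.comp (((flow_cont hF hΦ0 hΦ').comp
              (continuous_id.prodMk continuous_const)).measurable)).indicator hSmeas)
        _ = ENNReal.ofReal (ρ0 s) * ∫⁻ x in S, h (Φ x (-s)) ∂μ := by
            rw [lintegral_indicator hSmeas, Measure.restrict_restrict hSmeas,
              inter_eq_left.2 (fun x hx => hx.1)]
        _ ≤ ENNReal.ofReal (ρ0 s) * C :=
            mul_le_mul_right (key_lintegral hF hΦ0 hΦ' hΩ μ hinv h hs.le) _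
  calc ∫⁻ s, (∫⁻ x in Ω, G (x, s) ∂μ) ≤ ∫⁻ s, ENNReal.ofReal (ρ0 s) * C :=
      lintegral_mono inner_le
    _ = (∫⁻ s, ENNReal.ofReal (ρ0 s)) * C :=
        lintegral_mul_const C (ENNReal.measurable_ofReal.comp hρ0)
    _ = C * ∫⁻ s, ENNReal.ofReal (ρ0 s) := mul_comm _ _

def MollI {N : ℕ} (Ω : Set (Fin N → ℝ)) (Φ : (Fin N → ℝ) → ℝ → (Fin N → ℝ))
    (ρ0 : ℝ → ℝ) (h : (Fin N → ℝ) → ℝ) (x : Fin N → ℝ) : ℝ :=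
  ∫ s, (setA' Ω Φ).indicator (fun p => ρ0 p.2 * h (Φ p.1 (-p.2))) (x, s)

def MollL {N : ℕ} (Ω : Set (Fin N → ℝ)) (Φ : (Fin N → ℝ) → ℝ → (Fin N → ℝ))
    (ρ0 : ℝ → ℝ) (h : (Fin N → ℝ) → ℝ) (x : Fin N → ℝ) : ℝ≥0∞ :=
  ∫⁻ s, (setA' Ω Φ).indicator
    (fun p => ENNReal.ofReal (ρ0 p.2) * ENNReal.ofReal |h (Φ p.1 (-p.2))|) (x, s)

lemma curve_set_measurable (τ : ℝ≥0∞) :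
    MeasurableSet {s : ℝ | 0 < s ∧ ENNReal.ofReal s < τ} := by
  have : {s : ℝ | 0 < s ∧ ENNReal.ofReal s < τ} = Ioi 0 ∩ (ENNReal.ofReal ⁻¹' Iio τ) := rfl
  rw [this]
  exact measurableSet_Ioi.inter (ENNReal.measurable_ofReal measurableSet_Iio)

lemma moll_eq_MollI {Ω : Set (Fin N → ℝ)} (ρ0 : ℝ → ℝ) (h : (Fin N → ℝ) → ℝ) {x : Fin N → ℝ} (hx : x ∈ Ω) :
    moll Ω Φ ρ0 h x = MollI Ω Φ ρ0 h x := by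
  unfold moll curveInt MollI
  rw [← integral_indicator (μ := volume) (f := fun s => ρ0 s * h (Φ x (-s)))
    (curve_set_measurable (tauM Ω Φ x))]
  congr 1
  funext s
  simp only [Set.indicator, mem_setOf_eq, setA']
  by_cases hs : 0 < s ∧ ENNReal.ofReal s < tauM Ω Φ x
  · simp [hs, hx, hs.1, hs.2]
  · simp only [if_neg hs]
    refine (if_neg ?_).symm
    rintro ⟨-, h2, h3⟩
    exact hs ⟨h2, h3⟩

include hF hΦ0 hΦ' in
lemma MollI_stronglyMeasurable (hΩ : IsOpen Ω) {ρ0 : ℝ → ℝ} (hρ0 : Measurable ρ0)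
    {h : (Fin N → ℝ) → ℝ} (hh : Measurable h) :
    StronglyMeasurable (MollI Ω Φ ρ0 h) := by
  have hΦm : Measurable (fun p : (Fin N → ℝ) × ℝ => Φ p.1 (-p.2)) :=
    ((flow_cont hF hΦ0 hΦ').comp (continuous_fst.prodMk continuous_snd.neg)).measurable
  exact MeasureTheory.StronglyMeasurable.integral_prod_right'
    (((((hρ0.comp measurable_snd)).mul (hh.comp hΦm)).indicator
      (setA_measurable hF hΦ0 hΦ' hΩ)).stronglyMeasurable)

include hF hΦ0 hΦ' in
lemma MollL_measurable (hΩ : IsOpen Ω) {ρ0 : ℝ → ℝ} (hρ0 : Measurable ρ0)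
    {h : (Fin N → ℝ) → ℝ} (hh : Measurable h) :
    Measurable (MollL Ω Φ ρ0 h) := by
  have hΦm : Measurable (fun p : (Fin N → ℝ) × ℝ => Φ p.1 (-p.2)) :=
    ((flow_cont hF hΦ0 hΦ').comp (continuous_fst.prodMk continuous_snd.neg)).measurable
  exact Measurable.lintegral_prod_right'
    (((ENNReal.measurable_ofReal.comp (hρ0.comp measurable_snd)).mul
      (ENNReal.measurable_ofReal.comp ((hh.comp hΦm).abs))).indicator
      (setA_measurable hF hΦ0 hΦ' hΩ))

lemma norm_indicator_eq {Ω : Set (Fin N → ℝ)} {ρ0 : ℝ → ℝ} (hρnn : ∀ s, 0 ≤ ρ0 s)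
    (h : (Fin N → ℝ) → ℝ) (x : Fin N → ℝ) (s : ℝ) :
    ENNReal.ofReal ‖(setA' Ω Φ).indicator (fun p => ρ0 p.2 * h (Φ p.1 (-p.2))) (x, s)‖
      = (setA' Ω Φ).indicator
        (fun p => ENNReal.ofReal (ρ0 p.2) * ENNReal.ofReal |h (Φ p.1 (-p.2))|) (x, s) := by
  by_cases hmem : (x, s) ∈ setA' Ω Φ
  · rw [indicator_of_mem hmem, indicator_of_mem hmem, Real.norm_eq_abs, abs_mul,
      abs_of_nonneg (hρnn s), ENNReal.ofReal_mul (hρnn s)]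
  · rw [indicator_of_notMem hmem, indicator_of_notMem hmem]
    simp

lemma MollL_eq_lintegral_norm {Ω : Set (Fin N → ℝ)} {ρ0 : ℝ → ℝ} (hρnn : ∀ s, 0 ≤ ρ0 s)
    (h : (Fin N → ℝ) → ℝ) (x : Fin N → ℝ) :
    ∫⁻ s, ENNReal.ofReal ‖(setA' Ω Φ).indicator
        (fun p => ρ0 p.2 * h (Φ p.1 (-p.2))) (x, s)‖ = MollL Ω Φ ρ0 h x :=
  lintegral_congr fun s => norm_indicator_eq hρnn h x s

lemma abs_MollI_le {Ω : Set (Fin N → ℝ)} {ρ0 : ℝ → ℝ} (hρnn : ∀ s, 0 ≤ ρ0 s)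
    (h : (Fin N → ℝ) → ℝ) (x : Fin N → ℝ) :
    ENNReal.ofReal |MollI Ω Φ ρ0 h x| ≤ MollL Ω Φ ρ0 h x := by
  have h1 : |MollI Ω Φ ρ0 h x| ≤ (MollL Ω Φ ρ0 h x).toReal := by
    rw [← Real.norm_eq_abs, ← MollL_eq_lintegral_norm hρnn h x]
    exact norm_integral_le_lintegral_norm _
  calc ENNReal.ofReal |MollI Ω Φ ρ0 h x| ≤ ENNReal.ofReal (MollL Ω Φ ρ0 h x).toReal :=
      ENNReal.ofReal_le_ofReal h1
  _ ≤ MollL Ω Φ ρ0 h x := ENNReal.ofReal_toReal_le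

include hF hΦ0 hΦ' in
lemma integrable_inner (hΩ : IsOpen Ω) {ρ0 : ℝ → ℝ} (hρ0 : Measurable ρ0)
    (hρnn : ∀ s, 0 ≤ ρ0 s) {h : (Fin N → ℝ) → ℝ} (hh : Measurable h) {x : Fin N → ℝ}
    (hfin : MollL Ω Φ ρ0 h x < ⊤) :
    Integrable (fun s => (setA' Ω Φ).indicator
      (fun p => ρ0 p.2 * h (Φ p.1 (-p.2))) (x, s)) volume := by
  have hΦm : Measurable (fun p : (Fin N → ℝ) × ℝ => Φ p.1 (-p.2)) :=
    ((flow_cont hF hΦ0 hΦ').comp (continuous_fst.prodMk continuous_snd.neg)).measurable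
  have hmeas : Measurable (fun s => (setA' Ω Φ).indicator
      (fun p => ρ0 p.2 * h (Φ p.1 (-p.2))) (x, s)) :=
    (((hρ0.comp measurable_snd).mul (hh.comp hΦm)).indicator
      (setA_measurable hF hΦ0 hΦ' hΩ)).comp measurable_prodMk_left
  refine ⟨hmeas.aestronglyMeasurable, ?_⟩
  rw [hasFiniteIntegral_iff_norm]
  exact lt_of_eq_of_lt (MollL_eq_lintegral_norm hρnn h x) hfin

include hF hΦ0 hΦ' in
lemma abs_MollI_sub_le (hΩ : IsOpen Ω) {ρ0 : ℝ → ℝ} (hρ0 : Measurable ρ0)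
    (hρnn : ∀ s, 0 ≤ ρ0 s) {h₁ h₂ : (Fin N → ℝ) → ℝ} (hh₁ : Measurable h₁)
    (hh₂ : Measurable h₂) {x : Fin N → ℝ}
    (hfin₁ : MollL Ω Φ ρ0 h₁ x < ⊤) (hfin₂ : MollL Ω Φ ρ0 h₂ x < ⊤) :
    ENNReal.ofReal |MollI Ω Φ ρ0 h₁ x - MollI Ω Φ ρ0 h₂ x|
      ≤ MollL Ω Φ ρ0 (fun y => h₁ y - h₂ y) x := by
  have hdiff : MollI Ω Φ ρ0 h₁ x - MollI Ω Φ ρ0 h₂ x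
      = MollI Ω Φ ρ0 (fun y => h₁ y - h₂ y) x := by
    unfold MollI
    rw [← integral_sub (integrable_inner hF hΦ0 hΦ' hΩ hρ0 hρnn hh₁ hfin₁)
      (integrable_inner hF hΦ0 hΦ' hΩ hρ0 hρnn hh₂ hfin₂)]
    refine integral_congr_ae (Eventually.of_forall fun s => ?_)
    simp only [Set.indicator]
    by_cases hmem : (x, s) ∈ setA' Ω Φ
    · simp only [if_pos hmem]; ring
    · simp [if_neg hmem]
  rw [hdiff]
  exact abs_MollI_le hρnn _ x

include hF hΦ0 hΦ' in
lemma MollL_contract (hΩ : IsOpen Ω) (μ : Measure (Fin N → ℝ)) [SigmaFinite μ]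
    (hinv : ∀ (A : Set (Fin N → ℝ)) (t : ℝ), MeasurableSet A →
      μ ((fun x => Φ x t) '' A) = μ A)
    {ρ0 : ℝ → ℝ} (hρ0 : Measurable ρ0) {h : (Fin N → ℝ) → ℝ} (hh : Measurable h) :
    ∫⁻ x in Ω, MollL Ω Φ ρ0 h x ∂μ
      ≤ (∫⁻ y in Ω, ENNReal.ofReal |h y| ∂μ) * ∫⁻ s, ENNReal.ofReal (ρ0 s) :=
  contract hF hΦ0 hΦ' hΩ μ hinv (fun y => ENNReal.ofReal |h y|)
    (ENNReal.measurable_ofReal.comp hh.abs) ρ0 hρ0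

lemma mollifier_lintegral {ρ : ℕ → ℝ → ℝ}
    (hρ : ∀ n : ℕ, ContDiff ℝ (⊤ : ℕ∞) (ρ n) ∧ (∀ s, 0 ≤ ρ n s) ∧
      (∀ s, s ∉ Icc (0 : ℝ) (1 / (n + 1 : ℝ)) → ρ n s = 0) ∧ (∫ s, ρ n s) = 1) (n : ℕ) :
    ∫⁻ s, ENNReal.ofReal (ρ n s) = 1 := by
  have hcs : HasCompactSupport (ρ n) :=
    HasCompactSupport.intro (isCompact_Icc (a := (0:ℝ)) (b := 1 / (n + 1 : ℝ))) (hρ n).2.2.1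
  have hint : Integrable (ρ n) volume := (hρ n).1.continuous.integrable_of_hasCompactSupport hcs
  rw [← ofReal_integral_eq_lintegral_ofReal hint (Eventually.of_forall (hρ n).2.1),
    (hρ n).2.2.2, ENNReal.ofReal_one]

include hF hΦ0 hΦ' in
lemma MollI_tendsto (hΩ : IsOpen Ω) {g : (Fin N → ℝ) → ℝ} (hg : Continuous g)
    {ρ : ℕ → ℝ → ℝ}
    (hρ : ∀ n : ℕ, ContDiff ℝ (⊤ : ℕ∞) (ρ n) ∧ (∀ s, 0 ≤ ρ n s) ∧
      (∀ s, s ∉ Icc (0 : ℝ) (1 / (n + 1 : ℝ)) → ρ n s = 0) ∧ (∫ s, ρ n s) = 1)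
    {x : Fin N → ℝ} (hx : x ∈ Ω) :
    Tendsto (fun n => MollI Ω Φ (ρ n) g x) atTop (𝓝 (g x)) := by
  have hψ : Continuous (fun s : ℝ => g (Φ x (-s))) :=
    hg.comp ((flow_cont hF hΦ0 hΦ').comp (continuous_const.prodMk continuous_neg))
  -- choose θ with 0 < θ and ofReal θ < tauM
  have hτ : 0 < tauM Ω Φ x := tauM_pos hF hΦ0 hΦ' hΩ hx
  obtain ⟨θ, hθpos, hθ⟩ : ∃ θ : ℝ, 0 < θ ∧ ENNReal.ofReal θ < tauM Ω Φ x := by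
    rcases eq_or_ne (tauM Ω Φ x) ⊤ with htop | htop
    · exact ⟨1, one_pos, by simp [htop]⟩
    · refine ⟨(tauM Ω Φ x).toReal / 2, ?_, ?_⟩
      · have := ENNReal.toReal_pos hτ.ne' htop
        linarith
      · rw [ENNReal.ofReal_lt_iff_lt_toReal (by positivity) htop]
        have := ENNReal.toReal_pos hτ.ne' htop
        linarith
  rw [Metric.tendsto_atTop]
  intro ε hε
  obtain ⟨δ, hδpos, hδ⟩ := Metric.continuousAt_iff.1 hψ.continuousAt (ε/2) (by linarith)
  set η := min δ θ with hη
  have hηpos : 0 < η := lt_min hδpos hθpos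
  obtain ⟨n₀, hn₀⟩ := exists_nat_gt (1/η)
  refine ⟨n₀, fun n hn => ?_⟩
  have hsmall : 1 / ((n:ℝ) + 1) < η := by
    have h1 : (1:ℝ)/η < (n:ℝ) + 1 := by
      calc (1:ℝ)/η < n₀ := hn₀
      _ ≤ (n:ℝ) := by exact_mod_cast hn
      _ ≤ (n:ℝ) + 1 := by linarith
    rw [div_lt_iff₀ (by positivity)]
    rw [div_lt_iff₀ hηpos] at h1
    nlinarith
  -- MollI equals the plain mollified integral
  have heq : MollI Ω Φ (ρ n) g x = ∫ s, ρ n s * g (Φ x (-s)) := by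
    unfold MollI
    refine integral_congr_ae ?_
    have : ∀ s : ℝ, s ≠ 0 → (setA' Ω Φ).indicator
        (fun p => ρ n p.2 * g (Φ p.1 (-p.2))) (x, s) = ρ n s * g (Φ x (-s)) := by
      intro s hs0
      rcases lt_or_gt_of_ne hs0 with hneg | hpos
      · rw [indicator_of_notMem (fun hmem : (x,s) ∈ setA' Ω Φ => absurd hmem.2.1 (by linarith))]
        rw [(hρ n).2.2.1 s (fun hmem => by
          simp only [mem_Icc] at hmem; linarith [hmem.1]), zero_mul]
      · rcases le_or_gt s (1/((n:ℝ)+1)) with hsle | hsgt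
        · refine (indicator_of_mem ?_ _)
          refine ⟨hx, hpos, ?_⟩
          have : s < θ := lt_of_le_of_lt hsle (lt_of_lt_of_le hsmall (min_le_right _ _))
          exact lt_of_le_of_lt (ENNReal.ofReal_le_ofReal this.le) hθ
        · have hz : ρ n s = 0 := (hρ n).2.2.1 s (fun hmem => by
            simp only [mem_Icc] at hmem; linarith [hmem.2])
          simp only [Set.indicator]
          split_ifs <;> simp [hz]
    filter_upwards [compl_mem_ae_iff.2 (Real.volume_singleton (a := (0:ℝ)))] with s hs
    exact this s hs
  rw [Real.dist_eq, heq]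
  -- the standard mollifier estimate
  have hint1 : Integrable (fun s => ρ n s * g (Φ x (-s))) volume := by
    have hcs : HasCompactSupport (ρ n) :=
      HasCompactSupport.intro (isCompact_Icc (a := (0:ℝ)) (b := 1 / (n + 1 : ℝ))) (hρ n).2.2.1
    exact (((hρ n).1.continuous.mul hψ)).integrable_of_hasCompactSupport
      (hcs.mul_right)
  have hintρ : Integrable (ρ n) volume := by
    have hcs : HasCompactSupport (ρ n) :=
      HasCompactSupport.intro (isCompact_Icc (a := (0:ℝ)) (b := 1 / (n + 1 : ℝ))) (hρ n).2.2.1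
    exact (hρ n).1.continuous.integrable_of_hasCompactSupport hcs
  have hsplit : (∫ s, ρ n s * g (Φ x (-s))) - g x
      = ∫ s, ρ n s * (g (Φ x (-s)) - g x) := by
    have : ∫ s, ρ n s * (g (Φ x (-s)) - g x)
        = (∫ s, ρ n s * g (Φ x (-s))) - ∫ s, ρ n s * g x := by
      rw [← integral_sub hint1 (hintρ.mul_const _)]
      congr 1; funext s; ring
    rw [this, integral_mul_const, (hρ n).2.2.2, one_mul]
  rw [hsplit]
  set w : ℝ → ℝ := fun s => ρ n s * (g (Φ x (-s)) - g x) with hw_def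
  have hw : Integrable w volume := by
    refine (hint1.sub (hintρ.mul_const (g x))).congr (Eventually.of_forall fun s => ?_)
    show ρ n s * g (Φ x (-s)) - ρ n s * g x = w s
    rw [hw_def]; ring
  have hb : ∀ s, |w s| ≤ ρ n s * (ε/2) := by
    intro s
    rcases eq_or_ne (ρ n s) 0 with hz | hz
    · simp [hw_def, hz]
    · have hmem : s ∈ Icc (0:ℝ) (1/((n:ℝ)+1)) := by
        by_contra hc
        exact hz ((hρ n).2.2.1 s (by exact_mod_cast hc))
      have hsδ : dist s 0 < δ := by
        rw [Real.dist_eq, sub_zero, abs_of_nonneg hmem.1]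
        exact lt_of_le_of_lt hmem.2 (lt_of_lt_of_le hsmall (min_le_left _ _))
      have h2 := hδ hsδ
      rw [Real.dist_eq] at h2
      simp only [neg_zero, hΦ0] at h2
      rw [hw_def]
      simp only []
      rw [abs_mul, abs_of_nonneg ((hρ n).2.1 s)]
      exact mul_le_mul_of_nonneg_left h2.le ((hρ n).2.1 s)
  have habs : |∫ s, w s| ≤ ε/2 := by
    calc |∫ s, w s| ≤ ∫ s, |w s| := by
          simpa only [Real.norm_eq_abs] using norm_integral_le_integral_norm (μ := volume) w
      _ ≤ ∫ s, ρ n s * (ε/2) := integral_mono hw.abs (hintρ.mul_const _) (fun s => hb s)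
      _ = ε/2 := by rw [integral_mul_const, (hρ n).2.2.2, one_mul]
  calc |∫ s, w s| ≤ ε/2 := habs
  _ < ε := by linarith

include hF hΦ0 hΦ' in
lemma MollI_support {g : (Fin N → ℝ) → ℝ} {ρ0 : ℝ → ℝ}
    (hρ0supp : ∀ s, s ∉ Icc (0:ℝ) 1 → ρ0 s = 0)
    {x : Fin N → ℝ}
    (hx : x ∉ (fun p : (Fin N → ℝ) × ℝ => Φ p.1 p.2) '' (tsupport g ×ˢ Icc (0:ℝ) 1)) :
    MollI Ω Φ ρ0 g x = 0 := by
  unfold MollI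
  have : ∀ s : ℝ, (setA' Ω Φ).indicator (fun p => ρ0 p.2 * g (Φ p.1 (-p.2))) (x, s) = 0 := by
    intro s
    by_cases hmem : (x, s) ∈ setA' Ω Φ
    · rw [indicator_of_mem hmem]
      rcases eq_or_ne (ρ0 s) 0 with hz | hz
      · simp [hz]
      rcases eq_or_ne (g (Φ x (-s))) 0 with hgz | hgz
      · simp [hgz]
      exfalso
      apply hx
      have hsIcc : s ∈ Icc (0:ℝ) 1 := by
        by_contra hc
        exact hz (hρ0supp s hc)
      refine ⟨(Φ x (-s), s), ⟨subset_tsupport g hgz, hsIcc⟩, ?_⟩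
      show Φ (Φ x (-s)) s = x
      have := flow_inv hF hΦ0 hΦ' x (-s)
      simpa using this
    · rw [indicator_of_notMem hmem]
  simp only [this, integral_zero]

lemma MollL_le_of_bound {Ω : Set (Fin N → ℝ)} {g : (Fin N → ℝ) → ℝ} {C : ℝ}
    (hgC : ∀ y, |g y| ≤ C) {ρ0 : ℝ → ℝ} (hρ0 : Measurable ρ0)
    (hρint : ∫⁻ s, ENNReal.ofReal (ρ0 s) = 1) (x : Fin N → ℝ) :
    MollL Ω Φ ρ0 g x ≤ ENNReal.ofReal C := by
  have hle : ∀ s : ℝ, (setA' Ω Φ).indicator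
      (fun p => ENNReal.ofReal (ρ0 p.2) * ENNReal.ofReal |g (Φ p.1 (-p.2))|) (x, s)
      ≤ ENNReal.ofReal (ρ0 s) * ENNReal.ofReal C := by
    intro s
    by_cases hmem : (x, s) ∈ setA' Ω Φ
    · rw [indicator_of_mem hmem]
      exact mul_le_mul_right (ENNReal.ofReal_le_ofReal (hgC _)) _
    · rw [indicator_of_notMem hmem]
      exact zero_le
  calc MollL Ω Φ ρ0 g x ≤ ∫⁻ s, ENNReal.ofReal (ρ0 s) * ENNReal.ofReal C :=
      lintegral_mono hle
  _ = (∫⁻ s, ENNReal.ofReal (ρ0 s)) * ENNReal.ofReal C :=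
      lintegral_mul_const _ (ENNReal.measurable_ofReal.comp hρ0)
  _ = ENNReal.ofReal C := by rw [hρint, one_mul]


theorem stmt_9
    {N : ℕ} (hN : 1 ≤ N) (κ : ℝ≥0) (hκ : 0 < κ)
    (F : (Fin N → ℝ) → (Fin N → ℝ)) (hF : LipschitzWith κ F)
    (Φ : (Fin N → ℝ) → ℝ → (Fin N → ℝ))
    (hΦ0 : ∀ x, Φ x 0 = x)
    (hΦ' : ∀ x s, HasDerivAt (Φ x) (F (Φ x s)) s)
    (Ω : Set (Fin N → ℝ)) (hΩ : IsOpen Ω)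
    (μ : Measure (Fin N → ℝ)) [IsFiniteMeasureOnCompacts μ]
    (hinv : ∀ (A : Set (Fin N → ℝ)) (t : ℝ), MeasurableSet A →
      μ ((fun x => Φ x t) '' A) = μ A)
    (ρ : ℕ → ℝ → ℝ) (hρ : IsMollifier ρ)
    (f : (Fin N → ℝ) → ℝ) (hf : Integrable f (μ.restrict Ω)) :
    Tendsto (fun n => ∫ x in Ω, |moll Ω Φ (ρ n) f x - f x| ∂μ) atTop (𝓝 0) := by
  have hρx : ∀ n : ℕ, ContDiff ℝ (⊤ : ℕ∞) (ρ n) ∧ (∀ s, 0 ≤ ρ n s) ∧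
      (∀ s, s ∉ Icc (0 : ℝ) (1 / (n + 1 : ℝ)) → ρ n s = 0) ∧ (∫ s, ρ n s) = 1 := hρ

  have hΩm : MeasurableSet Ω := hΩ.measurableSet
  set ν := μ.restrict Ω with hν
  -- measurable representative
  set f' : (Fin N → ℝ) → ℝ := hf.1.mk f with hf'def
  have hf'sm : StronglyMeasurable f' := hf.1.stronglyMeasurable_mk
  have hf'meas : Measurable f' := hf'sm.measurable
  have hff' : f =ᵐ[ν] f' := hf.1.ae_eq_mk
  have hf'int : Integrable f' ν := hf.congr hff'
  have hρmeas : ∀ n, Measurable (ρ n) := fun n => (hρx n).1.continuous.measurable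
  have hρnn : ∀ n s, 0 ≤ ρ n s := fun n => (hρx n).2.1
  have hρ1 : ∀ n, ∫⁻ s, ENNReal.ofReal (ρ n s) = 1 := mollifier_lintegral hρx
  -- the exceptional null set
  set t : Set (Fin N → ℝ) := toMeasurable ν {y | ¬ f y = f' y} with ht_def
  have htm : MeasurableSet t := measurableSet_toMeasurable ν _
  have ht0 : ν t = 0 := by
    rw [ht_def, measure_toMeasurable]
    exact ae_iff.1 hff'
  set D : Set (Fin N → ℝ) := t ∩ Ω with hD_def
  have hDm : MeasurableSet D := htm.inter hΩm
  have hD0 : μ D = 0 := by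
    have : ν t = μ (t ∩ Ω) := Measure.restrict_apply htm
    rw [← this, ht0]
  -- a.e. x, the mollification does not see the difference between f and f'
  have hae : ∀ᵐ x ∂ν, ∀ n, MollI Ω Φ (ρ n) f x = MollI Ω Φ (ρ n) f' x := by
    have hcon := contract hF hΦ0 hΦ' hΩ μ hinv (D.indicator (fun _ => (1:ℝ≥0∞)))
      (measurable_const.indicator hDm) (fun _ => (1:ℝ)) measurable_const
    have h0 : ∫⁻ y in Ω, D.indicator (fun _ => (1:ℝ≥0∞)) y ∂μ = 0 := by
      rw [lintegral_indicator_const hDm, Measure.restrict_apply hDm]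
      exact mul_eq_zero.2 (Or.inr (le_antisymm
        (le_trans (measure_mono inter_subset_left) hD0.le) (zero_le)))
    rw [h0, zero_mul] at hcon
    have hinner_meas : Measurable (fun x => ∫⁻ s, (setA' Ω Φ).indicator
        (fun p => ENNReal.ofReal ((fun _ : ℝ => (1:ℝ)) p.2)
          * D.indicator (fun _ => (1:ℝ≥0∞)) (Φ p.1 (-p.2))) (x, s)) := by
      have hΦm : Measurable (fun p : (Fin N → ℝ) × ℝ => Φ p.1 (-p.2)) :=
        ((flow_cont hF hΦ0 hΦ').comp (continuous_fst.prodMk continuous_snd.neg)).measurable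
      exact Measurable.lintegral_prod_right'
        ((measurable_const.mul ((measurable_const.indicator hDm).comp hΦm)).indicator
          (setA_measurable hF hΦ0 hΦ' hΩ))
    have hzero := (lintegral_eq_zero_iff hinner_meas).1
      (le_antisymm (le_trans (le_of_eq rfl) hcon) (zero_le))
    filter_upwards [hzero, ae_restrict_mem hΩm] with x hx hxΩ
    intro n
    -- inner integrand vanishes a.e. in s
    have hmeas_s : Measurable (fun s => (setA' Ω Φ).indicator
        (fun p => ENNReal.ofReal ((fun _ : ℝ => (1:ℝ)) p.2)
          * D.indicator (fun _ => (1:ℝ≥0∞)) (Φ p.1 (-p.2))) (x, s)) := by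
      have hΦm : Measurable (fun p : (Fin N → ℝ) × ℝ => Φ p.1 (-p.2)) :=
        ((flow_cont hF hΦ0 hΦ').comp (continuous_fst.prodMk continuous_snd.neg)).measurable
      exact ((measurable_const.mul ((measurable_const.indicator hDm).comp hΦm)).indicator
        (setA_measurable hF hΦ0 hΦ' hΩ)).comp measurable_prodMk_left
    have hs0 := (lintegral_eq_zero_iff hmeas_s).1 hx
    unfold MollI
    refine integral_congr_ae ?_
    filter_upwards [hs0] with s hs
    by_cases hmem : (x, s) ∈ setA' Ω Φ
    · rw [indicator_of_mem hmem, indicator_of_mem hmem]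
      have hval : D.indicator (fun _ => (1:ℝ≥0∞)) (Φ x (-s)) = 0 := by
        have := hs
        rw [indicator_of_mem hmem] at this
        simpa using this
      have hnotD : Φ x (-s) ∉ D := by
        intro hmemD
        rw [indicator_of_mem hmemD] at hval
        exact one_ne_zero hval
      have hmemΩ : Φ x (-s) ∈ Ω :=
        mem_of_lt_tauM hF hΦ0 hΦ' hΩ hxΩ hmem.2.1.le hmem.2.2
      have hnott : Φ x (-s) ∉ t := fun hmt => hnotD ⟨hmt, hmemΩ⟩
      have : f (Φ x (-s)) = f' (Φ x (-s)) := by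
        by_contra hne
        exact hnott (subset_toMeasurable ν _ hne)
      rw [this]
    · rw [indicator_of_notMem hmem, indicator_of_notMem hmem]
  -- the main lintegral quantity
  set L : ℕ → ℝ≥0∞ :=
    fun n => ∫⁻ x in Ω, ENNReal.ofReal |MollI Ω Φ (ρ n) f' x - f' x| ∂μ with hL_def
  have hIf' : ∫⁻ x in Ω, ENNReal.ofReal |f' x| ∂μ < ⊤ := by
    have := hf'int.2
    rw [hasFiniteIntegral_iff_norm] at this
    simpa [Real.norm_eq_abs] using this
  have hL : Tendsto L atTop (𝓝 0) := by
    rw [ENNReal.tendsto_atTop_zero]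
    intro ε hε
    rcases eq_or_ne ε ⊤ with rfl | hεtop
    · exact ⟨0, fun n _ => le_top⟩
    set δ := ε / 3 with hδ_def
    have hδ0 : δ ≠ 0 := by
      simp only [hδ_def, ne_eq, ENNReal.div_eq_zero_iff]
      push_neg
      exact ⟨hε.ne', by norm_num⟩
    -- approximation by a compactly supported continuous function
    have hf'ind : Integrable (Ω.indicator f') μ :=
      (integrable_indicator_iff hΩm).2 hf'int
    obtain ⟨g, hgsupp, hgl1, hgcont, hgint⟩ :=
      hf'ind.exists_hasCompactSupport_lintegral_sub_le hδ0
    have hfg : ∫⁻ x in Ω, ENNReal.ofReal |f' x - g x| ∂μ ≤ δ := by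
      have heqΩ : ∀ x ∈ Ω, ENNReal.ofReal |f' x - g x|
          = (‖(Ω.indicator f') x - g x‖₊ : ℝ≥0∞) := by
        intro x hx
        rw [indicator_of_mem hx, ← Real.enorm_eq_ofReal_abs, enorm_eq_nnnorm]
      calc ∫⁻ x in Ω, ENNReal.ofReal |f' x - g x| ∂μ
          = ∫⁻ x in Ω, (‖(Ω.indicator f') x - g x‖₊ : ℝ≥0∞) ∂μ :=
            setLIntegral_congr_fun hΩm heqΩ
        _ ≤ ∫⁻ x, (‖(Ω.indicator f') x - g x‖₊ : ℝ≥0∞) ∂μ := setLIntegral_le_lintegral _ _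
        _ ≤ δ := hgl1
    obtain ⟨C, hgC⟩ := hgsupp.exists_bound_of_continuous hgcont
    have hgC' : ∀ y, |g y| ≤ C := fun y => by
      have := hgC y; rwa [Real.norm_eq_abs] at this
    have hC0 : 0 ≤ C := le_trans (abs_nonneg _) (hgC' (fun _ => 0))
    -- the compact set where the mollification of g lives
    set K' : Set (Fin N → ℝ) :=
      (fun p : (Fin N → ℝ) × ℝ => Φ p.1 p.2) '' (tsupport g ×ˢ Icc (0:ℝ) 1) with hK'_def
    have hK'c : IsCompact K' :=
      (hgsupp.prod isCompact_Icc).image (flow_cont hF hΦ0 hΦ')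
    set K'' : Set (Fin N → ℝ) := K' ∪ tsupport g with hK''_def
    have hK''c : IsCompact K'' := hK'c.union hgsupp
    have hK''m : MeasurableSet K'' := hK''c.isClosed.measurableSet
    have hρsupp1 : ∀ n : ℕ, ∀ s : ℝ, s ∉ Icc (0:ℝ) 1 → ρ n s = 0 := by
      intro n s hs
      refine (hρx n).2.2.1 s (fun hmem => hs ?_)
      refine ⟨hmem.1, le_trans hmem.2 ?_⟩
      rw [div_le_one (by positivity)]
      have : (0:ℝ) ≤ n := Nat.cast_nonneg n
      linarith
    have hMg_bound : ∀ n x, |MollI Ω Φ (ρ n) g x| ≤ C := by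
      intro n x
      have h1 := abs_MollI_le (Φ := Φ) (Ω := Ω) (hρnn n) g x
      have h2 := MollL_le_of_bound (Φ := Φ) (Ω := Ω) hgC' (hρmeas n) (hρ1 n) x
      have := le_trans h1 h2
      rwa [ENNReal.ofReal_le_ofReal_iff hC0] at this
    -- B n → 0 by dominated convergence
    set B : ℕ → ℝ≥0∞ :=
      fun n => ∫⁻ x, ENNReal.ofReal |MollI Ω Φ (ρ n) g x - g x| ∂ν with hB_def
    have hB : Tendsto B atTop (𝓝 0) := by
      have h0 : (0:ℝ≥0∞) = ∫⁻ _x, (fun _ => (0:ℝ≥0∞)) _x ∂ν := by simp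
      rw [hB_def, h0]
      refine tendsto_lintegral_of_dominated_convergence
        (K''.indicator (fun _ => ENNReal.ofReal (2*C))) (fun n => ?_) (fun n => ?_) ?_ ?_
      · exact ENNReal.measurable_ofReal.comp
          (((MollI_stronglyMeasurable hF hΦ0 hΦ' hΩ (hρmeas n)
            hgcont.measurable).measurable.sub hgcont.measurable).abs)
      · refine ae_of_all _ fun x => ?_
        by_cases hx : x ∈ K''
        · rw [indicator_of_mem hx]
          refine ENNReal.ofReal_le_ofReal ?_
          calc |MollI Ω Φ (ρ n) g x - g x| ≤ |MollI Ω Φ (ρ n) g x| + |g x| := abs_sub _ _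
          _ ≤ C + C := add_le_add (hMg_bound n x) (hgC' x)
          _ = 2*C := by ring
        · rw [indicator_of_notMem hx]
          have hg0 : g x = 0 := image_eq_zero_of_notMem_tsupport
            (fun hmem => hx (Or.inr hmem))
          have hM0 : MollI Ω Φ (ρ n) g x = 0 :=
            MollI_support hF hΦ0 hΦ' (hρsupp1 n) (fun hmem => hx (Or.inl hmem))
          simp [hg0, hM0]
      · refine ne_of_lt ?_
        calc ∫⁻ x, K''.indicator (fun _ => ENNReal.ofReal (2*C)) x ∂ν
            ≤ ∫⁻ x, K''.indicator (fun _ => ENNReal.ofReal (2*C)) x ∂μ :=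
              setLIntegral_le_lintegral _ _
          _ = ENNReal.ofReal (2*C) * μ K'' := lintegral_indicator_const hK''m _
          _ < ⊤ := ENNReal.mul_lt_top ENNReal.ofReal_lt_top hK''c.measure_lt_top
      · filter_upwards [ae_restrict_mem hΩm] with x hx
        have hM := MollI_tendsto hF hΦ0 hΦ' hΩ hgcont hρx hx
        have h1 : Tendsto (fun n => |MollI Ω Φ (ρ n) g x - g x|) atTop (𝓝 0) := by
          have := hM.sub_const (g x)
          rw [sub_self] at this
          simpa using this.abs
        have := (ENNReal.continuous_ofReal.tendsto 0).comp h1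
        simpa [Function.comp_def] using this
    -- conclude
    have hbound : ∀ n, L n ≤ δ + B n + δ := by
      intro n
      have hfin_ae : ∀ᵐ x ∂ν, MollL Ω Φ (ρ n) f' x < ⊤ := by
        refine ae_lt_top (MollL_measurable hF hΦ0 hΦ' hΩ (hρmeas n) hf'meas) ?_
        refine ne_of_lt (lt_of_le_of_lt
          (MollL_contract hF hΦ0 hΦ' hΩ μ hinv (hρmeas n) hf'meas) ?_)
        rw [hρ1 n, mul_one]
        exact hIf'
      have hptwise : ∀ᵐ x ∂ν, ENNReal.ofReal |MollI Ω Φ (ρ n) f' x - f' x|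
          ≤ MollL Ω Φ (ρ n) (fun y => f' y - g y) x
            + ENNReal.ofReal |MollI Ω Φ (ρ n) g x - g x| + ENNReal.ofReal |g x - f' x| := by
        filter_upwards [hfin_ae] with x hfin
        have htri : |MollI Ω Φ (ρ n) f' x - f' x|
            ≤ |MollI Ω Φ (ρ n) f' x - MollI Ω Φ (ρ n) g x|
              + |MollI Ω Φ (ρ n) g x - g x| + |g x - f' x| := by
          have := abs_sub_le (MollI Ω Φ (ρ n) f' x) (g x) (f' x)
          have h2 := abs_sub_le (MollI Ω Φ (ρ n) f' x) (MollI Ω Φ (ρ n) g x) (g x)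
          linarith
        calc ENNReal.ofReal |MollI Ω Φ (ρ n) f' x - f' x|
            ≤ ENNReal.ofReal (|MollI Ω Φ (ρ n) f' x - MollI Ω Φ (ρ n) g x|
              + |MollI Ω Φ (ρ n) g x - g x| + |g x - f' x|) := ENNReal.ofReal_le_ofReal htri
          _ = ENNReal.ofReal |MollI Ω Φ (ρ n) f' x - MollI Ω Φ (ρ n) g x|
              + ENNReal.ofReal |MollI Ω Φ (ρ n) g x - g x|
              + ENNReal.ofReal |g x - f' x| := by
              rw [ENNReal.ofReal_add (by positivity) (abs_nonneg _),
                ENNReal.ofReal_add (abs_nonneg _) (abs_nonneg _)]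
          _ ≤ MollL Ω Φ (ρ n) (fun y => f' y - g y) x
              + ENNReal.ofReal |MollI Ω Φ (ρ n) g x - g x| + ENNReal.ofReal |g x - f' x| := by
              gcongr
              refine abs_MollI_sub_le hF hΦ0 hΦ' hΩ (hρmeas n) (hρnn n)
                hf'meas hgcont.measurable hfin ?_
              exact lt_of_le_of_lt (MollL_le_of_bound hgC' (hρmeas n) (hρ1 n) x)
                ENNReal.ofReal_lt_top
      have hmeas1 : Measurable (MollL Ω Φ (ρ n) (fun y => f' y - g y)) :=
        MollL_measurable hF hΦ0 hΦ' hΩ (hρmeas n) (hf'meas.sub hgcont.measurable)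
      have hmeas2 : Measurable (fun x => ENNReal.ofReal |MollI Ω Φ (ρ n) g x - g x|) :=
        ENNReal.measurable_ofReal.comp
          (((MollI_stronglyMeasurable hF hΦ0 hΦ' hΩ (hρmeas n)
            hgcont.measurable).measurable.sub hgcont.measurable).abs)
      calc L n ≤ ∫⁻ x, (MollL Ω Φ (ρ n) (fun y => f' y - g y) x
            + ENNReal.ofReal |MollI Ω Φ (ρ n) g x - g x|
            + ENNReal.ofReal |g x - f' x|) ∂ν := lintegral_mono_ae hptwise
        _ = (∫⁻ x, MollL Ω Φ (ρ n) (fun y => f' y - g y) x ∂ν)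
            + (∫⁻ x, ENNReal.ofReal |MollI Ω Φ (ρ n) g x - g x| ∂ν)
            + ∫⁻ x, ENNReal.ofReal |g x - f' x| ∂ν := by
            rw [lintegral_add_left (f := fun x => MollL Ω Φ (ρ n) (fun y => f' y - g y) x
              + ENNReal.ofReal |MollI Ω Φ (ρ n) g x - g x|) (hmeas1.add hmeas2), lintegral_add_left hmeas1]
        _ ≤ δ + B n + δ := by
            gcongr
            · refine le_trans (MollL_contract hF hΦ0 hΦ' hΩ μ hinv (hρmeas n)
                (hf'meas.sub hgcont.measurable)) ?_
              rw [hρ1 n, mul_one]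
              exact hfg
            · refine le_trans (le_of_eq ?_) hfg
              exact lintegral_congr fun x => by rw [abs_sub_comm]
    have hBev : ∀ᶠ n in atTop, B n < δ :=
      hB.eventually_lt_const (pos_iff_ne_zero.2 hδ0)
    rw [eventually_atTop] at hBev
    obtain ⟨n₀, hn₀⟩ := hBev
    refine ⟨n₀, fun n hn => ?_⟩
    calc L n ≤ δ + B n + δ := hbound n
      _ ≤ δ + δ + δ := by gcongr; exact (hn₀ n hn).le
      _ = 3 * δ := by ring
      _ = ε := by
        rw [hδ_def]
        exact ENNReal.mul_div_cancel' (by norm_num) (by norm_num)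
  -- transfer to the Bochner integral
  have hfinal : ∀ n, ∫ x in Ω, |moll Ω Φ (ρ n) f x - f x| ∂μ = (L n).toReal := by
    intro n
    have hcongr : ∫ x in Ω, |moll Ω Φ (ρ n) f x - f x| ∂μ
        = ∫ x in Ω, |MollI Ω Φ (ρ n) f' x - f' x| ∂μ := by
      refine integral_congr_ae ?_
      filter_upwards [hae, hff', ae_restrict_mem hΩm] with x hx1 hx2 hx3
      rw [moll_eq_MollI (Φ := Φ) (ρ n) f hx3, hx1 n, hx2]
    rw [hcongr]
    rw [integral_eq_lintegral_of_nonneg_ae (f := fun x => |MollI Ω Φ (ρ n) f' x - f' x|) (ae_of_all _ fun x => abs_nonneg _)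
      (((MollI_stronglyMeasurable hF hΦ0 hΦ' hΩ (hρmeas n)
        hf'meas).measurable.sub hf'meas).abs.aestronglyMeasurable)]
  have htoReal : Tendsto (fun n => (L n).toReal) atTop (𝓝 0) := by
    have := (ENNReal.tendsto_toReal (a := 0) (by simp)).comp hL
    simpa [Function.comp_def] using this
  refine htoReal.congr fun n => (hfinal n).symm

end
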